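/- arXiv:1408.2277 — 2 statements merged into one kernel-verified Lean document; each statement's English description precedes it below -/
import Mathlib

section
/- For all natural numbers n, the sequence (i_n) satisfies the recurrences i_{4n} = i_n, i_{4n+1} = i_{2n}, i_{4n+2} = -i_{2n}, and i_{4n+3} = i_n. -/
/-!
Appending a bit `1` to the binary word of `n` creates no new inversion, while appending a `0`
creates one inversion per `1` of `n`. Hence `inv₂(2n+1) = inv₂(n)` and
`inv₂(2n) = inv₂(n) + s(n)`, where `s` is the binary digit sum, with `s(2n) = s(n)` and
`s(2n+1) = s(n) + 1`. Applying these twice gives the four recurrences; in `i_{4n}` the two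
contributions `s(2n) = s(n)` cancel mod 2.
-/

/-- `inv2 n` is the number of inversions in the binary representation of `n`,
i.e. the number of pairs of bit positions `a > b` such that bit `a` of `n` is `1`
and bit `b` of `n` is `0`. -/
def inv2 (n : ℕ) : ℕ :=
  ((Finset.range (n + 1) ×ˢ Finset.range (n + 1)).filter
    (fun p => p.2 < p.1 ∧ n.testBit p.1 = true ∧ n.testBit p.2 = false)).card

def iSeq (n : ℕ) : ℤ := (-1) ^ inv2 n

namespace Nat

theorem testBit_two_mul_succ (n i : ℕ) : (2 * n).testBit (i + 1) = n.testBit i := by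
  rw [testBit_add_one]; congr 1; omega

theorem testBit_two_mul_add_one_succ (n i : ℕ) : (2 * n + 1).testBit (i + 1) = n.testBit i := by
  rw [testBit_add_one]; congr 1; omega

theorem lt_succ_of_testBit {n i : ℕ} (h : n.testBit i = true) : i < n + 1 :=
  lt_succ_of_le (Nat.lt_two_pow_self.le.trans (ge_two_pow_of_testBit h))

end Nat

open Nat

def setBits (n : ℕ) : Set ℕ := {i | n.testBit i}

def inversions (n : ℕ) : Set (ℕ × ℕ) :=
  {p | p.2 < p.1 ∧ n.testBit p.1 = true ∧ n.testBit p.2 = false}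

theorem setBits_finite (n : ℕ) : (setBits n).Finite :=
  (Set.finite_Iio (n + 1)).subset fun _ => lt_succ_of_testBit

theorem inversions_eq_coe_filter (n : ℕ) :
    inversions n = ↑((Finset.range (n + 1) ×ˢ Finset.range (n + 1)).filter
      (fun p => p.2 < p.1 ∧ n.testBit p.1 = true ∧ n.testBit p.2 = false)) := by
  ext ⟨a, b⟩
  simp only [inversions, Set.mem_ofPred_eq, Finset.coe_filter, Finset.mem_product,
    Finset.mem_range]
  refine ⟨fun h => ⟨⟨lt_succ_of_testBit h.2.1, ?_⟩, h⟩, And.right⟩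
  exact h.1.trans (lt_succ_of_testBit h.2.1)

theorem inversions_finite (n : ℕ) : (inversions n).Finite := by
  rw [inversions_eq_coe_filter]; exact Finset.finite_toSet _

theorem inv2_eq_ncard_inversions (n : ℕ) : inv2 n = (inversions n).ncard := by
  rw [inversions_eq_coe_filter, Set.ncard_coe_finset, inv2]

theorem setBits_two_mul (n : ℕ) : setBits (2 * n) = succ '' setBits n := by
  ext (_ | i) <;> simp [setBits, testBit_two_mul_succ]

theorem setBits_two_mul_add_one (n : ℕ) :
    setBits (2 * n + 1) = insert 0 (succ '' setBits n) := by
  ext (_ | i) <;> simp [setBits, testBit_two_mul_add_one_succ]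

theorem inversions_two_mul_add_one (n : ℕ) :
    inversions (2 * n + 1) = Prod.map succ succ '' inversions n := by
  ext ⟨_ | a, _ | b⟩ <;> simp [inversions, testBit_two_mul_add_one_succ]

theorem inversions_two_mul (n : ℕ) :
    inversions (2 * n) =
      Prod.map succ succ '' inversions n ∪ (fun i => (i + 1, 0)) '' setBits n := by
  ext ⟨_ | a, _ | b⟩ <;> simp [inversions, setBits, testBit_two_mul_succ]

theorem inv2_two_mul_add_one (n : ℕ) : inv2 (2 * n + 1) = inv2 n := by
  rw [inv2_eq_ncard_inversions, inv2_eq_ncard_inversions, inversions_two_mul_add_one,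
    Set.ncard_image_of_injective _ (Prod.map_injective.2 ⟨succ_injective, succ_injective⟩)]

theorem inv2_two_mul (n : ℕ) : inv2 (2 * n) = inv2 n + (setBits n).ncard := by
  have hdisj :
      Disjoint (Prod.map succ succ '' inversions n) ((fun i => (i + 1, 0)) '' setBits n) := by
    simp only [Set.disjoint_left, Set.mem_image]
    rintro _ ⟨p, -, rfl⟩ ⟨i, -, h⟩
    exact succ_ne_zero p.2 (congrArg Prod.snd h).symm
  rw [inv2_eq_ncard_inversions, inv2_eq_ncard_inversions, inversions_two_mul,
    Set.ncard_union_eq hdisj ((inversions_finite n).image _) ((setBits_finite n).image _),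
    Set.ncard_image_of_injective _ (Prod.map_injective.2 ⟨succ_injective, succ_injective⟩),
    Set.ncard_image_of_injective _ fun i j h => by simpa using h]

theorem ncard_setBits_two_mul (n : ℕ) : (setBits (2 * n)).ncard = (setBits n).ncard := by
  rw [setBits_two_mul, Set.ncard_image_of_injective _ succ_injective]

theorem ncard_setBits_two_mul_add_one (n : ℕ) :
    (setBits (2 * n + 1)).ncard = (setBits n).ncard + 1 := by
  rw [setBits_two_mul_add_one, Set.ncard_insert_of_notMem (by simp) ((setBits_finite n).image _),
    Set.ncard_image_of_injective _ succ_injective]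

theorem iSeq_two_mul_add_one (n : ℕ) : iSeq (2 * n + 1) = iSeq n := by
  rw [iSeq, iSeq, inv2_two_mul_add_one]

theorem iSeq_two_mul (n : ℕ) : iSeq (2 * n) = (-1) ^ (setBits n).ncard * iSeq n := by
  rw [iSeq, iSeq, inv2_two_mul, pow_add, mul_comm]

theorem iSeq_four_mul_recurrences (n : ℕ) :
    iSeq (4 * n) = iSeq n ∧ iSeq (4 * n + 1) = iSeq (2 * n) ∧
      iSeq (4 * n + 2) = -iSeq (2 * n) ∧ iSeq (4 * n + 3) = iSeq n := by
  have h0 : 4 * n = 2 * (2 * n) := by ring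
  have h1 : 4 * n + 1 = 2 * (2 * n) + 1 := by ring
  have h2 : 4 * n + 2 = 2 * (2 * n + 1) := by ring
  have h3 : 4 * n + 3 = 2 * (2 * n + 1) + 1 := by ring
  refine ⟨?_, ?_, ?_, ?_⟩
  · rw [h0, iSeq_two_mul, iSeq_two_mul, ncard_setBits_two_mul, ← mul_assoc, ← pow_add,
      Even.neg_one_pow ⟨_, rfl⟩, one_mul]
  · rw [h1, iSeq_two_mul_add_one]
  · rw [h2, iSeq_two_mul, ncard_setBits_two_mul_add_one, iSeq_two_mul_add_one, iSeq_two_mul]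
    ring
  · rw [h3, iSeq_two_mul_add_one, iSeq_two_mul_add_one]
end

section
/- The limit as k → ∞ of S(2^{2k+1} - 1)/√(2^{2k+1} - 1) equals √2. -/
/-- The summatory function `S N = ∑_{0 ≤ n ≤ N} iSeq n`. -/
def S (N : ℕ) : ℤ := ∑ n ∈ Finset.range (N + 1), iSeq n

/-!
A trailing binary digit `1` creates no inversion, while a trailing `0` creates one with every
`1` before it, so `inv2 (2n+1) = inv2 n` and `inv2 (2n) = inv2 n + popcount n`. Hence the dyadic
block sums `T m = ∑_{i < 2^m} i_i` and `U m = ∑_{i < 2^m} (-1)^{popcount i} i_i` satisfy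
`T (m+1) = T m + U m` and `U (m+1) = T m - U m`, so `T (m+2) = 2 T m`. With `T 1 = 2` this gives
`S (2^{2k+1} - 1) = T (2k+1) = 2^{k+1} = √(2 · 2^{2k+1})`, and the limit follows.
-/

open Finset

lemma lt_of_testBit_of_lt_two_pow {n a M : ℕ} (ha : n.testBit a = true) (hn : n < 2 ^ M) :
    a < M :=
  (Nat.pow_lt_pow_iff_right (by norm_num : 1 < 2)).1 ((Nat.ge_two_pow_of_testBit ha).trans_lt hn)

lemma inv2_eq_sum {n M : ℕ} (hn : n < 2 ^ M) :
    inv2 n = ∑ a ∈ range M, ∑ b ∈ range M,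
      if b < a ∧ n.testBit a = true ∧ n.testBit b = false then 1 else 0 := by
  rw [← sum_product', ← card_filter, inv2]
  congr 1
  ext ⟨a, b⟩
  simp only [mem_filter, mem_product, mem_range, and_congr_left_iff]
  rintro ⟨hba, ha, -⟩
  have := lt_of_testBit_of_lt_two_pow ha hn
  have := Nat.lt_two_pow_self.trans_le (Nat.ge_two_pow_of_testBit ha)
  omega

def popcount (n : ℕ) : ℕ := #{a ∈ range (n + 1) | n.testBit a = true}

lemma popcount_eq_sum {n M : ℕ} (hn : n < 2 ^ M) :
    popcount n = ∑ a ∈ range M, if n.testBit a = true then 1 else 0 := by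
  rw [← card_filter, popcount]
  congr 1
  ext a
  simp only [mem_filter, mem_range, and_congr_left_iff]
  intro ha
  have := lt_of_testBit_of_lt_two_pow ha hn
  have := Nat.lt_two_pow_self.trans_le (Nat.ge_two_pow_of_testBit ha)
  omega

lemma bit_lt_two_pow_succ {n M : ℕ} (b : Bool) (hn : n < 2 ^ M) : Nat.bit b n < 2 ^ (M + 1) := by
  cases b <;> simp [Nat.bit_val, pow_succ] <;> omega

lemma inv2_bit (b : Bool) (n : ℕ) :
    inv2 (Nat.bit b n) = inv2 n + if b then 0 else popcount n := by
  have hn : n < 2 ^ n := Nat.lt_two_pow_self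
  rw [inv2_eq_sum hn, inv2_eq_sum (bit_lt_two_pow_succ b hn), sum_range_succ']
  simp only [sum_range_succ', Nat.testBit_bit_succ, Nat.testBit_bit_zero, Nat.succ_lt_succ_iff]
  cases b <;> simp [popcount_eq_sum hn, sum_add_distrib]

lemma popcount_bit (b : Bool) (n : ℕ) : popcount (Nat.bit b n) = popcount n + b.toNat := by
  have hn : n < 2 ^ n := Nat.lt_two_pow_self
  rw [popcount_eq_sum hn, popcount_eq_sum (bit_lt_two_pow_succ b hn), sum_range_succ']
  simp only [Nat.testBit_bit_succ, Nat.testBit_bit_zero]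
  cases b <;> simp

lemma iSeq_bit_false (n : ℕ) : iSeq (Nat.bit false n) = (-1) ^ popcount n * iSeq n := by
  rw [iSeq, iSeq, inv2_bit, if_neg Bool.false_ne_true, pow_add, mul_comm]

lemma iSeq_bit_true (n : ℕ) : iSeq (Nat.bit true n) = iSeq n := by
  rw [iSeq, iSeq, inv2_bit, if_pos rfl, add_zero]

lemma sum_range_two_mul {M : Type*} [AddCommMonoid M] (f : ℕ → M) (n : ℕ) :
    ∑ i ∈ range (2 * n), f i = ∑ i ∈ range n, (f (2 * i) + f (2 * i + 1)) := by
  induction n with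
  | zero => simp
  | succ n ih => rw [Nat.mul_succ, sum_range_succ, sum_range_succ, ih, sum_range_succ, add_assoc]

def blockSum (m : ℕ) : ℤ := ∑ i ∈ range (2 ^ m), iSeq i

def twistedBlockSum (m : ℕ) : ℤ := ∑ i ∈ range (2 ^ m), (-1) ^ popcount i * iSeq i

lemma sum_range_two_pow_succ {M : Type*} [AddCommMonoid M] (f : ℕ → M) (m : ℕ) :
    ∑ i ∈ range (2 ^ (m + 1)), f i =
      ∑ i ∈ range (2 ^ m), (f (Nat.bit false i) + f (Nat.bit true i)) := by
  simp [pow_succ', sum_range_two_mul, Nat.bit_val]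

lemma blockSum_succ (m : ℕ) : blockSum (m + 1) = blockSum m + twistedBlockSum m := by
  rw [blockSum, blockSum, twistedBlockSum, sum_range_two_pow_succ, ← sum_add_distrib]
  refine sum_congr rfl fun i _ => ?_
  rw [iSeq_bit_false, iSeq_bit_true, add_comm]

lemma twistedBlockSum_succ (m : ℕ) :
    twistedBlockSum (m + 1) = blockSum m - twistedBlockSum m := by
  rw [blockSum, twistedBlockSum, twistedBlockSum, sum_range_two_pow_succ, ← sum_sub_distrib]
  refine sum_congr rfl fun i _ => ?_
  rw [iSeq_bit_false, iSeq_bit_true, popcount_bit, popcount_bit, ← mul_assoc, ← pow_add,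
    Even.neg_one_pow (by simp), Bool.toNat_true, pow_succ]
  ring

lemma blockSum_add_two (m : ℕ) : blockSum (m + 2) = 2 * blockSum m := by
  rw [blockSum_succ, blockSum_succ, twistedBlockSum_succ]
  ring

lemma blockSum_two_mul_add_one (k : ℕ) : blockSum (2 * k + 1) = 2 ^ (k + 1) := by
  induction k with
  | zero => decide
  | succ k ih => rw [Nat.mul_succ, blockSum_add_two, ih, pow_succ 2 (k + 1), mul_comm]

lemma S_two_pow_sub_one (m : ℕ) : S (2 ^ m - 1) = blockSum m := by
  rw [S, Nat.sub_add_cancel Nat.one_le_two_pow, blockSum]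

open Filter Topology

lemma tendsto_sqrt_two_mul_add_one_div_sqrt :
    Tendsto (fun x : ℝ => √(2 * (x + 1)) / √x) atTop (𝓝 √2) := by
  have h : Tendsto (fun x : ℝ => √(2 + 2 * x⁻¹)) atTop (𝓝 √2) := by
    simpa using ((tendsto_inv_atTop_zero.const_mul 2).const_add 2).sqrt
  refine h.congr' ?_
  filter_upwards [eventually_gt_atTop 0] with x hx
  rw [← Real.sqrt_div' _ hx.le]
  congr 1
  field_simp

theorem summatory_max_limit :
    Filter.Tendsto
      (fun k : ℕ => (S (2 ^ (2 * k + 1) - 1) : ℝ) / Real.sqrt ((2 : ℝ) ^ (2 * k + 1) - 1))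
      Filter.atTop (nhds (Real.sqrt 2)) := by
  have hS (k : ℕ) :
      (S (2 ^ (2 * k + 1) - 1) : ℝ) = √(2 * (((2 : ℝ) ^ (2 * k + 1) - 1) + 1)) := by
    rw [S_two_pow_sub_one, blockSum_two_mul_add_one, sub_add_cancel, ← pow_succ',
      show 2 * k + 1 + 1 = (k + 1) * 2 by ring, pow_mul, Real.sqrt_sq (by positivity),
      Int.cast_pow, Int.cast_ofNat]
  have hN : Tendsto (fun k : ℕ => (2 : ℝ) ^ (2 * k + 1) - 1) atTop atTop := by
    simpa only [sub_eq_add_neg, Function.comp_apply] using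
      tendsto_atTop_add_const_right _ (-1) <|
        (tendsto_pow_atTop_atTop_of_one_lt one_lt_two).comp <|
          tendsto_atTop_mono (fun k => show k ≤ 2 * k + 1 by omega) tendsto_id
  simpa only [hS, Function.comp_def] using tendsto_sqrt_two_mul_add_one_div_sqrt.comp hN
end
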